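/- arXiv:math/0305226 — 2 statements merged into one kernel-verified Lean document; each statement's English description precedes it below -/
import Mathlib

section
/- Let K ⊆ F be a field extension, let L/K be a (possibly infinite) Galois extension inside a fixed separable closure, and suppose F is linearly disjoint from L over K in the sense that the restriction map Gal(FL/F) → Gal(L/K) is an isomorphism. If moreover F·K^sep = F^sep and F/K is regular (K separably algebraically closed in F), then res : G_F → G_K is an isomorphism of profinite groups. -/
/-!
Regularity of `F/K` forces the minimal polynomial over `F` of any `α` separable over `K` to be
defined over `K`: its coefficients are symmetric functions of `K`-conjugates of `α`, hence lie in
`F` and are separable over `K`. So `K^sep` and `F` are linearly disjoint over `K`, i.e.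
`F ⊗[K] K^sep` embeds into `Ω` by multiplication, and it is a field. For `τ ∈ Gal(K^sep/K)` the
map `f ⊗ a ↦ f · τ a` is a second `F`-embedding of this field, which extends to an element of
`G_F` because `Ω/F` is normal: restriction is surjective. It is injective because an element of
`G_F` is determined by its action on `F^sep = F·K^sep`, `Ω/F^sep` being purely inseparable.
-/

open IntermediateField Polynomial
open scoped TensorProduct

theorem minpoly.map_eq_of_isSeparable_of_regular
    {K F Ω : Type*} [Field K] [Field F] [Field Ω] [Algebra K F] [Algebra F Ω]
    [Algebra K Ω] [IsScalarTower K F Ω] [IsAlgClosed Ω]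
    (hreg : ∀ x : F, IsSeparable K x → x ∈ (algebraMap K F).range)
    {α : Ω} (hα : IsSeparable K α) :
    (minpoly K α).map (algebraMap K F) = minpoly F α := by
  have hFint : IsIntegral F α := hα.isIntegral.tower_top
  have hdvd : minpoly F α ∣ (minpoly K α).map (algebraMap K F) :=
    minpoly.dvd_map_of_isScalarTower K F α
  have hroots : ∀ r ∈ ((minpoly F α).map (algebraMap F Ω)).roots,
      r ∈ (algebraMap (separableClosure K Ω) Ω).range := by
    intro r hr
    have hr' : Polynomial.aeval r (minpoly K α) = 0 := by
      rw [← aeval_map_algebraMap F, ← eval_map_algebraMap]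
      exact eval_eq_zero_of_dvd_of_eval_eq_zero (map_dvd _ hdvd) (isRoot_of_mem_roots hr)
    exact ⟨⟨r, mem_separableClosure_iff.2 (hα.of_dvd (minpoly.dvd K r hr'))⟩, rfl⟩
  have hcoeff : ∀ n, (minpoly F α).coeff n ∈ (algebraMap K F).range := by
    intro n
    obtain ⟨c, hc⟩ := (lifts_iff_coeff_lifts _).1
      ((IsAlgClosed.splits _).mem_lift_of_roots_mem_range ((minpoly.monic hFint).map _) _ hroots) n
    refine hreg _ (IsSeparable.of_algHom (IsScalarTower.toAlgHom K F Ω) ?_)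
    rw [IsScalarTower.coe_toAlgHom', ← coeff_map, ← hc]
    exact mem_separableClosure_iff.1 c.2
  obtain ⟨q, hq, -, -⟩ := lifts_and_degree_eq_and_monic
    ((lifts_iff_coeff_lifts _).2 hcoeff) (minpoly.monic hFint)
  have hqα : Polynomial.aeval α q = 0 := by
    rw [← aeval_map_algebraMap F, hq, minpoly.aeval]
  have hdvd' : (minpoly K α).map (algebraMap K F) ∣ minpoly F α :=
    hq ▸ map_dvd (algebraMap K F) (minpoly.dvd K α hqα)
  exact eq_of_monic_of_associated ((minpoly.monic hα.isIntegral).map _) (minpoly.monic hFint)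
    (associated_of_dvd_dvd hdvd' hdvd)

namespace IntermediateField

variable {K L Ω : Type*} [Field K] [Field L] [Field Ω] [Algebra K L] [Algebra L Ω]
  [Algebra K Ω] [IsScalarTower K L Ω]

theorem linearDisjoint_adjoin_simple_of_minpoly_map_eq {α : Ω} (hα : IsIntegral K α)
    (h : (minpoly K α).map (algebraMap K L) = minpoly L α) : K⟮α⟯.LinearDisjoint L := by
  refine .of_basis_left (adjoin.powerBasis hα).basis ?_
  have hdeg : (minpoly L α).natDegree = (adjoin.powerBasis hα).dim := by
    rw [← h, natDegree_map, adjoin.powerBasis_dim]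
  convert (linearIndependent_pow (K := L) α).comp (Fin.cast hdeg.symm) (Fin.cast_injective _)
  ext i
  simp

theorem linearDisjoint_of_forall_adjoin_simple (A : IntermediateField K Ω)
    [Algebra.IsSeparable K A] (h : ∀ α ∈ A, K⟮α⟯.LinearDisjoint L) : A.LinearDisjoint L := by
  rw [linearDisjoint_iff]
  have : Algebra.IsIntegral K A.toSubalgebra := inferInstanceAs (Algebra.IsIntegral K A)
  refine Subalgebra.LinearDisjoint.of_linearDisjoint_finite_left _ _ fun B hBA _ => ?_
  let E : IntermediateField K Ω := Algebra.IsAlgebraic.toIntermediateField B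
  have : FiniteDimensional K E := inferInstanceAs (Module.Finite K B)
  have : Algebra.IsSeparable K E := .of_algHom K A (inclusion (E := E) (F := A) hBA)
  obtain ⟨a, ha⟩ := Field.exists_primitive_element K E
  have hE : K⟮(a : Ω)⟯ = E := by rw [← lift_adjoin_simple, ha, lift_top]
  have := (linearDisjoint_iff _ _).1 (h a (hBA a.2))
  rwa [hE] at this

theorem LinearDisjoint.exists_algEquiv_extend [Normal L Ω] {A : IntermediateField K Ω}
    [Algebra.IsAlgebraic K A] (H : A.LinearDisjoint L) (τ : A →ₐ[K] Ω) :
    ∃ σ : Ω ≃ₐ[L] Ω, ∀ x : A, σ x = τ x := by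
  let : Field (L ⊗[K] A) := ((Algebra.TensorProduct.comm K L A).toMulEquiv.isField
    (H.isField_of_isAlgebraic (Or.inl ‹_›))).toField
  let m : L ⊗[K] A →ₐ[L] Ω := Algebra.TensorProduct.productLeftAlgHom (Algebra.ofId L Ω) A.val
  let g : L ⊗[K] A →ₐ[L] Ω := Algebra.TensorProduct.productLeftAlgHom (Algebra.ofId L Ω) τ
  let : Algebra (L ⊗[K] A) Ω := m.toAlgebra
  have : IsScalarTower L (L ⊗[K] A) Ω := .of_algebraMap_eq fun x => (m.commutes x).symm
  refine ⟨AlgEquiv.ofBijective (g.liftNormal Ω) (AlgHom.normal_bijective L Ω Ω _), fun x => ?_⟩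
  have hx : algebraMap (L ⊗[K] A) Ω (1 ⊗ₜ x) = x := by
    simp [m, RingHom.algebraMap_toAlgebra]
  have hg : g (1 ⊗ₜ x) = τ x := by simp [g]
  simpa [hx, hg] using g.liftNormal_commutes Ω (1 ⊗ₜ x)

end IntermediateField

theorem separableClosure_linearDisjoint_of_regular
    {K F Ω : Type*} [Field K] [Field F] [Field Ω] [Algebra K F] [Algebra F Ω]
    [Algebra K Ω] [IsScalarTower K F Ω] [IsAlgClosed Ω]
    (hreg : ∀ x : F, IsSeparable K x → x ∈ (algebraMap K F).range) :
    (separableClosure K Ω).LinearDisjoint F :=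
  linearDisjoint_of_forall_adjoin_simple _ fun _ hα =>
    have hα := mem_separableClosure_iff.1 hα
    linearDisjoint_adjoin_simple_of_minpoly_map_eq hα.isIntegral
      (minpoly.map_eq_of_isSeparable_of_regular hreg hα)

theorem AlgHom.ext_of_eqOn_of_adjoin_eq_separableClosure
    {F Ω Ω' : Type*} [Field F] [Field Ω] [Field Ω'] [Algebra F Ω] [Algebra F Ω']
    [Algebra.IsAlgebraic F Ω] {S : Set Ω} (hS : adjoin F S = separableClosure F Ω)
    {φ ψ : Ω →ₐ[F] Ω'} (h : Set.EqOn φ ψ S) : φ = ψ := by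
  have hsep : φ.comp (separableClosure F Ω).val = ψ.comp (separableClosure F Ω).val :=
    algHom_ext_of_eq_adjoin F hS.symm fun _ hx => h hx
  exact AlgHom.coe_ringHom_injective <|
    IsPurelyInseparable.injective_comp_algebraMap (separableClosure F Ω) Ω Ω' <|
      congrArg AlgHom.toRingHom hsep

theorem res_bijective_of_linearlyDisjoint_general
    (K F Ω : Type*) [Field K] [Field F] [Field Ω] [Algebra K F] [Algebra F Ω]
    [Algebra K Ω] [IsScalarTower K F Ω] [IsAlgClosed Ω] [Algebra.IsAlgebraic F Ω]
    -- `F·K^sep = F^sep`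
    (hcomp : IntermediateField.adjoin F ((separableClosure K Ω : IntermediateField K Ω) :
        Set Ω) = separableClosure F Ω)
    -- `F/K` is regular
    (hreg : ∀ x : F, IsSeparable K x → x ∈ (algebraMap K F).range) :
    Function.Bijective
      (fun σ : Ω ≃ₐ[F] Ω =>
        AlgEquiv.restrictNormal (σ.restrictScalars K) (separableClosure K Ω)) := by
  refine ⟨fun σ σ' h => ?_, fun τ => ?_⟩
  · refine AlgEquiv.coe_toAlgHom_injective <|
      AlgHom.ext_of_eqOn_of_adjoin_eq_separableClosure hcomp fun x hx => ?_
    let y : separableClosure K Ω := ⟨x, hx⟩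
    have res_apply (ρ : Ω ≃ₐ[F] Ω) :
        ρ x = (AlgEquiv.restrictNormal (ρ.restrictScalars K) (separableClosure K Ω) y : Ω) :=
      (AlgEquiv.restrictNormal_commutes (ρ.restrictScalars K) _ y).symm
    exact (res_apply σ).trans ((congrArg (fun ρ => (ρ y : Ω)) h).trans (res_apply σ').symm)
  · have : IsAlgClosure F Ω := ⟨‹_›, ‹_›⟩
    obtain ⟨σ, hσ⟩ := (separableClosure_linearDisjoint_of_regular hreg).exists_algEquiv_extend
      ((separableClosure K Ω).val.comp τ.toAlgHom)
    exact ⟨σ, AlgEquiv.ext fun x => Subtype.val_injective <|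
      (AlgEquiv.restrictNormal_commutes _ _ x).trans (hσ x)⟩

/-- Let `K ⊆ F` be a field extension, `Ω` an algebraic closure of `F`, and let
`L/K` be a (possibly infinite) Galois extension inside the separable closure
`K^sep = separableClosure K Ω` of `K`.  Suppose `F` is linearly disjoint from `L`
over `K` in the sense that the restriction map `Gal(FL/F) → Gal(L/K)` is an
isomorphism (equivalently: the restriction map `G_F → Gal(L/K)`, which always
factors injectively through `Gal(FL/F)`, is surjective).  If moreover
`F·K^sep = F^sep` and `F/K` is regular (`K` separably algebraically closed in `F`),
then the restriction map `res : G_F → G_K` is an isomorphism of profinite groups. -/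
theorem res_bijective_of_linearlyDisjoint
    (K F Ω : Type*) [Field K] [Field F] [Field Ω] [Algebra K F] [Algebra F Ω]
    [Algebra K Ω] [IsScalarTower K F Ω] [IsAlgClosed Ω] [Algebra.IsAlgebraic F Ω]
    (L : IntermediateField K Ω) (hL : L ≤ separableClosure K Ω) [IsGalois K L]
    -- linear disjointness: `Gal(FL/F) → Gal(L/K)` is an isomorphism
    (hdisj : Function.Surjective
      (fun σ : Ω ≃ₐ[F] Ω => AlgEquiv.restrictNormal (σ.restrictScalars K) L))
    -- `F·K^sep = F^sep`
    (hcomp : IntermediateField.adjoin F ((separableClosure K Ω : IntermediateField K Ω) :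
        Set Ω) = separableClosure F Ω)
    -- `F/K` is regular
    (hreg : ∀ x : F, IsSeparable K x → x ∈ (algebraMap K F).range) :
    Function.Bijective
      (fun σ : Ω ≃ₐ[F] Ω =>
        AlgEquiv.restrictNormal (σ.restrictScalars K) (separableClosure K Ω)) :=
  res_bijective_of_linearlyDisjoint_general K F Ω hcomp hreg
end

section
/- Let K ⊆ F be fields with K relatively separably algebraically closed in F, and let v be a henselian valuation on F whose restriction to K is a valuation. Then the restriction of v to K is henselian. -/
open Polynomial IsLocalRing

/-! A Hensel lift in `v` of a simple root over the restricted valuation ring is a simple root in `F`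
of a polynomial over `K`, hence separable over `K`, hence already an element of `K`. -/

theorem IsLocalRing.isUnit_iff_of_sub_mem_maximalIdeal {R : Type*} [CommRing R] [IsLocalRing R]
    {x y : R} (h : x - y ∈ maximalIdeal R) : IsUnit x ↔ IsUnit y := by
  have : residue R x = residue R y := Ideal.Quotient.eq.mpr h
  rw [← residue_ne_zero_iff_isUnit, ← residue_ne_zero_iff_isUnit, this]

theorem HenselianLocalRing.of_isLocalHom_of_forall_isRoot_mem_range {R S : Type*} [CommRing R]
    [IsLocalRing R] [CommRing S] [HenselianLocalRing S] (φ : R →+* S) [IsLocalHom φ]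
    (hφ : Function.Injective φ)
    (h : ∀ (f : R[X]) (a : S), (f.map φ).IsRoot a → IsUnit ((f.map φ).derivative.eval a) →
      a ∈ φ.range) :
    HenselianLocalRing R where
  is_henselian f hf a₀ h₀ h₀' := by
    have hmax (x : R) : φ x ∈ maximalIdeal S ↔ x ∈ maximalIdeal R := by
      simp only [mem_maximalIdeal, mem_nonunits_iff, isUnit_map_iff]
    have hφeval (g : R[X]) (x : R) : (g.map φ).eval (φ x) = φ (g.eval x) := by
      rw [eval_map, eval₂_at_apply]
    obtain ⟨a, ha, ha₀⟩ := HenselianLocalRing.is_henselian (f.map φ) (hf.map φ) (φ a₀)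
      (by rwa [hφeval, hmax]) (by rwa [derivative_map, hφeval, isUnit_map_iff])
    have hda : IsUnit ((f.map φ).derivative.eval a) := by
      have hcong : (f.map φ).derivative.eval a - (f.map φ).derivative.eval (φ a₀) ∈
          maximalIdeal S :=
        Ideal.mem_of_dvd _ (sub_dvd_eval_sub _ _ _) ha₀
      rwa [isUnit_iff_of_sub_mem_maximalIdeal hcong, derivative_map, hφeval, isUnit_map_iff]
    obtain ⟨b, rfl⟩ := h f a ha hda
    refine ⟨b, hφ ?_, ?_⟩
    · rw [← hφeval, map_zero]; exact ha
    · rwa [← hmax, map_sub]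

namespace ValuationSubring

variable {K L : Type*} [Field K] [Field L] (A : ValuationSubring L) (f : K →+* L)

def comapRingHom : A.comap f →+* A :=
  f.restrict (A.comap f) A fun _ ↦ mem_comap.mp

theorem comapRingHom_injective : Function.Injective (A.comapRingHom f) :=
  fun _ _ h ↦ Subtype.ext <| f.injective <| congrArg Subtype.val h

instance isLocalHom_comapRingHom : IsLocalHom (A.comapRingHom f) where
  map_nonunit x hx := by
    obtain ⟨y, hy⟩ := isUnit_iff_exists_inv.mp hx
    have hy' : f x * y = 1 := congrArg Subtype.val hy
    have hx0 : (x : K) ≠ 0 := by rintro h; simp [h] at hy'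
    have hinv : (x : K)⁻¹ ∈ A.comap f := by
      rw [mem_comap, map_inv₀, inv_eq_of_mul_eq_one_right hy']
      exact y.2
    exact isUnit_iff_exists_inv.mpr ⟨⟨_, hinv⟩, Subtype.ext (mul_inv_cancel₀ hx0)⟩

theorem coe_eval_map_comapRingHom (g : (A.comap f)[X]) (a : A) :
    (((g.map (A.comapRingHom f)).eval a : A) : L) =
      (g.map (algebraMap (A.comap f) K)).eval₂ f a := by
  rw [eval₂_map, eval_map]
  exact hom_eval₂ g _ A.subtype a

end ValuationSubring

theorem IsSeparable.of_aeval_derivative_ne_zero {K L : Type*} [Field K] [Field L] [Algebra K L]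
    {x : L} {p : K[X]} (hp : aeval x p = 0) (hp' : aeval x (derivative p) ≠ 0) :
    IsSeparable K x := by
  have hp0 : p ≠ 0 := by rintro rfl; simp at hp'
  have hx : IsIntegral K x := IsAlgebraic.isIntegral ⟨p, hp0, hp⟩
  obtain ⟨q, rfl⟩ := minpoly.dvd K x hp
  rw [IsSeparable, separable_iff_derivative_ne_zero (minpoly.irreducible hx)]
  intro hm
  simp [derivative_mul, hm] at hp'

/-- Henselianity descends to relatively separably algebraically closed subfields:
if `K` is relatively separably algebraically closed in `F` and `v` is a henselian
valuation on `F`, then the restriction of `v` to `K` is henselian. -/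
theorem henselian_comap_of_relSepClosed
    (K F : Type*) [Field K] [Field F] [Algebra K F]
    (hrel : ∀ x : F, IsSeparable K x → x ∈ (algebraMap K F).range)
    (v : ValuationSubring F) (hv : HenselianLocalRing v) :
    HenselianLocalRing (v.comap (algebraMap K F)) := by
  refine .of_isLocalHom_of_forall_isRoot_mem_range (v.comapRingHom (algebraMap K F))
    (v.comapRingHom_injective _) fun f a ha hda ↦ ?_
  have hsep : IsSeparable K (a : F) := by
    refine .of_aeval_derivative_ne_zero (p := f.map (algebraMap _ K)) ?_ ?_
    · rw [aeval_def, ← ValuationSubring.coe_eval_map_comapRingHom, ha.eq_zero,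
        ZeroMemClass.coe_zero]
    · rw [aeval_def, derivative_map, ← ValuationSubring.coe_eval_map_comapRingHom,
        ← derivative_map]
      exact fun h ↦ hda.ne_zero (Subtype.ext h)
  obtain ⟨b, hb⟩ := hrel _ hsep
  exact ⟨⟨b, ValuationSubring.mem_comap.mpr (hb ▸ a.2)⟩, Subtype.ext hb⟩
end
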